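/- Let K ⊆ X be a subshift such that E_K is closed. Then K has a strictly positive g-function. -/

import Mathlib

variable {A : Type*}

/-- The shift map on `X = ℕ → A`, deleting the last symbol `x 0`. -/
def shiftMap : (ℕ → A) → (ℕ → A) := fun x n => x (n + 1)

/-- The extension `(x, a)` of the sequence `x` by the symbol `a`. -/
def extend (x : ℕ → A) (a : A) : ℕ → A := fun n => Nat.casesOn n a x

/-- The exit set `E_K` of a set `K ⊆ X`. -/
def exitSet (K : Set (ℕ → A)) : Set (ℕ → A) := {x | x ∉ K ∧ shiftMap x ∈ K}

/-- Property `G`: there is no `x` with `(x, a)` in the closure of `E_K` for every `a`. -/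
def PropertyG [TopologicalSpace A] (K : Set (ℕ → A)) : Prop :=
  ¬ ∃ x : ℕ → A, ∀ a : A, extend x a ∈ closure (exitSet K)

/-- A subshift: closed, nonempty and `Θ(K) = K`. -/
def IsSubshift [TopologicalSpace A] (K : Set (ℕ → A)) : Prop :=
  IsClosed K ∧ K.Nonempty ∧ shiftMap '' K = K

/-- A continuous `g`-function: `0 ≤ g ≤ 1` and the unconditional sum
`∑_{a ∈ A} g((x,a)) = 1` for every `x`. -/
def IsGFunction [TopologicalSpace A] (g : (ℕ → A) → ℝ) : Prop :=
  Continuous g ∧ (∀ x, 0 ≤ g x) ∧ (∀ x, g x ≤ 1) ∧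
    ∀ x : ℕ → A, HasSum (fun a : A => g (extend x a)) 1

/-- `K` is invariant for `g` if `g` vanishes on the exit set of `K`. -/
def InvariantFor (K : Set (ℕ → A)) (g : (ℕ → A) → ℝ) : Prop :=
  ∀ x ∈ exitSet K, g x = 0

/-- The word `w` (a nonempty finite tuple) appears in `x`. -/
def Appears (w : List A) (x : ℕ → A) : Prop :=
  ∃ i : ℕ, ∀ k : ℕ, ∀ h : k < w.length, x (i + k) = w.get ⟨k, h⟩

/-- `X_F`: the set of all `x` in which no word of `F` appears. -/
def XofF (F : Set (List A)) : Set (ℕ → A) := {x | ∀ w ∈ F, ¬ Appears w x}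

/-- A subshift of finite type: `K = X_F` for a finite set `F` of (nonempty) words. -/
def IsFiniteType (K : Set (ℕ → A)) : Prop :=
  ∃ F : Set (List A), F.Finite ∧ (∀ w ∈ F, w ≠ []) ∧ K = XofF F

/-! ### Auxiliary lemmas -/

lemma shiftMap_extend (x : ℕ → A) (a : A) : shiftMap (extend x a) = x := rfl

lemma extend_shiftMap (y : ℕ → A) : extend (shiftMap y) (y 0) = y := by
  funext n; cases n <;> rfl

lemma extend_zero (x : ℕ → A) (a : A) : extend x a 0 = a := rfl

/-- A strictly positive probability vector on a countable nonempty type. -/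
lemma exists_prob [Nonempty A] [Countable A] :
    ∃ p : A → ℝ, (∀ a, 0 < p a) ∧ HasSum p 1 := by
  obtain ⟨ι, hι⟩ := Countable.exists_injective_nat A
  set q : A → ℝ := fun a => (1 / 2 : ℝ) ^ ι a with hq
  have hqpos : ∀ a, 0 < q a := fun a => by positivity
  have hqs : Summable q := by
    have : Summable fun n : ℕ => (1 / 2 : ℝ) ^ n :=
      summable_geometric_of_lt_one (by norm_num) (by norm_num)
    exact this.comp_injective hι
  have hspos : 0 < ∑' a, q a :=
    Summable.tsum_pos hqs (fun a => (hqpos a).le) (Classical.arbitrary A)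
      (hqpos (Classical.arbitrary A))
  refine ⟨fun a => q a / ∑' a, q a, fun a => div_pos (hqpos a) hspos, ?_⟩
  have := hqs.hasSum.div_const (∑' a, q a)
  rwa [div_self hspos.ne'] at this

lemma main_aux [Nonempty A] [Countable A] [TopologicalSpace A] [DiscreteTopology A]
    (K : Set (ℕ → A)) (hK : IsSubshift K) (h' : (ℕ → A) → ℝ)
    (hc : Continuous h') (h0 : ∀ y, 0 ≤ h' y) (h1 : ∀ y, h' y ≤ 1)
    (hiff : ∀ y, h' y = 0 ↔ y ∈ exitSet K) :
    ∃ g : (ℕ → A) → ℝ, IsGFunction g ∧ InvariantFor K g ∧ ∀ x ∈ K, 0 < g x := by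
  obtain ⟨p, hppos, hps⟩ := exists_prob (A := A)
  set t : (ℕ → A) → ℝ := fun y => h' y * p (y 0) with ht
  have htc : Continuous t := hc.mul (continuous_of_discreteTopology.comp (continuous_apply 0))
  have ht0 : ∀ y, 0 ≤ t y := fun y => mul_nonneg (h0 y) (hppos _).le
  have hbound : ∀ (x : ℕ → A) (a : A), t (extend x a) ≤ p a := fun x a => by
    have : h' (extend x a) * p a ≤ 1 * p a :=
      mul_le_mul_of_nonneg_right (h1 _) (hppos a).le
    simpa [ht, extend_zero] using this
  have hsumm : ∀ x : ℕ → A, Summable fun a => t (extend x a) := fun x =>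
    Summable.of_nonneg_of_le (fun a => ht0 _) (fun a => hbound x a) hps.summable
  set S : (ℕ → A) → ℝ := fun x => ∑' a, t (extend x a) with hS
  have hSc : Continuous S := by
    refine continuous_tsum (fun a => htc.comp ?_) hps.summable (fun a x => ?_)
    · exact continuous_pi fun n => by
        cases n with
        | zero => exact continuous_const
        | succ m => exact continuous_apply m
    · rw [Real.norm_eq_abs, abs_of_nonneg (ht0 _)]; exact hbound x a
  -- for every `x` some extension avoids the exit set
  have hextend : ∀ x : ℕ → A, ∃ a : A, extend x a ∉ exitSet K := by
    intro x
    by_cases hx : x ∈ K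
    · have : x ∈ shiftMap '' K := by rw [hK.2.2]; exact hx
      obtain ⟨y, hyK, hyx⟩ := this
      refine ⟨y 0, fun hmem => ?_⟩
      have : extend x (y 0) ∈ K := by
        rw [← hyx, extend_shiftMap]; exact hyK
      exact hmem.1 this
    · exact ⟨Classical.arbitrary A, fun hmem => hx (by
        have := hmem.2; rwa [shiftMap_extend] at this)⟩
  have hSpos : ∀ x, 0 < S x := by
    intro x
    obtain ⟨a, ha⟩ := hextend x
    have hh : 0 < h' (extend x a) :=
      lt_of_le_of_ne (h0 _) (fun he => ha ((hiff _).mp he.symm))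
    have htpos : 0 < t (extend x a) := mul_pos hh (hppos _)
    exact lt_of_lt_of_le htpos (Summable.le_tsum (hsumm x) a fun b _ => ht0 _)
  refine ⟨fun y => t y / S (shiftMap y), ⟨?_, ?_, ?_, ?_⟩, ?_, ?_⟩
  · exact htc.div (hSc.comp (continuous_pi fun n => continuous_apply (n + 1)))
      (fun y => (hSpos _).ne')
  · exact fun y => div_nonneg (ht0 y) (hSpos _).le
  · intro y
    rw [div_le_one (hSpos _)]
    have := Summable.le_tsum (hsumm (shiftMap y)) (y 0) fun b _ => ht0 _
    rwa [extend_shiftMap] at this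
  · intro x
    have : HasSum (fun a => t (extend x a) / S x) (S x / S x) :=
      (hsumm x).hasSum.div_const _
    rw [div_self (hSpos x).ne'] at this
    convert this using 2 with a
    rfl
  · intro y hy
    have h0' : h' y = 0 := (hiff y).mpr hy
    simp [ht, h0']
  · intro x hxK
    have hx : x ∉ exitSet K := fun hmem => hmem.1 hxK
    have hh : 0 < h' x := lt_of_le_of_ne (h0 _) (fun he => hx ((hiff _).mp he.symm))
    exact div_pos (mul_pos hh (hppos _)) (hSpos _)

theorem exitSet_closed_imp_strictly_positive_g
    [Nonempty A] [Countable A] [TopologicalSpace A] [DiscreteTopology A]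
    (K : Set (ℕ → A)) (hK : IsSubshift K) (h : IsClosed (exitSet K)) :
    ∃ g : (ℕ → A) → ℝ, IsGFunction g ∧ InvariantFor K g ∧ ∀ x ∈ K, 0 < g x := by
  rcases Set.eq_empty_or_nonempty (exitSet K) with hE | hE
  · exact main_aux K hK (fun _ => 1) continuous_const (fun _ => zero_le_one)
      (fun _ => le_refl 1) (fun y => by simp [hE])
  · letI : MetricSpace (ℕ → A) := TopologicalSpace.metrizableSpaceMetric (ℕ → A)
    refine main_aux K hK (fun y => min (Metric.infDist y (exitSet K)) 1)
      ((Metric.continuous_infDist_pt _).min continuous_const)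
      (fun y => le_min Metric.infDist_nonneg zero_le_one)
      (fun y => min_le_right _ _) (fun y => ?_)
    constructor
    · intro hmin
      have hm : min (Metric.infDist y (exitSet K)) 1 = 0 := hmin
      rcases min_cases (Metric.infDist y (exitSet K)) 1 with ⟨he, _⟩ | ⟨he, _⟩
      · rw [he] at hm
        exact (h.mem_iff_infDist_zero hE).mpr hm
      · rw [he] at hm; norm_num at hm
    · intro hy
      have h0' := (h.mem_iff_infDist_zero hE).mp hy
      show min (Metric.infDist y (exitSet K)) 1 = 0
      simp [h0']
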